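/- arXiv:math/0610447 — 4 statements merged into one kernel-verified Lean document; each statement's English description precedes it below -/
import Mathlib

section
/- Let F be a field and let v be a unit of F with v - v⁻¹ ≠ 0. Let A be an associative unital F-algebra containing elements E⁺, E⁻, K, K' satisfying: K·K' = 1 = K'·K; K·E⁺ = v²·E⁺·K; K·E⁻ = v⁻²·E⁻·K; and (v - v⁻¹)·(E⁺·E⁻ - E⁻·E⁺) = K - K'. Then both quantum Serre relations hold: (a) (E⁺)³E⁻ - (v² + 1 + v⁻²)(E⁺)²E⁻E⁺ + (v² + 1 + v⁻²)E⁺E⁻(E⁺)² - E⁻(E⁺)³ = 0, and (b) (E⁻)³E⁺ - (v² + 1 + v⁻²)(E⁻)²E⁺E⁻ + (v² + 1 + v⁻²)E⁻E⁺(E⁻)² - E⁺(E⁻)³ = 0. -/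
/-- Auxiliary: the first quantum Serre relation, in a form symmetric enough to be
applied twice (with `v ↦ v⁻¹`, `E⁺ ↔ E⁻`) to get both relations. -/
theorem serre_aux {F : Type*} [Field F] {A : Type*} [Ring A] [Algebra F A]
    (v : F) (hv : v ≠ 0) (hvv : v - v⁻¹ ≠ 0)
    (Ep Em K K' : A)
    (h1 : K * K' = 1) (h1' : K' * K = 1)
    (h2 : K * Ep = (v ^ 2) • (Ep * K))
    (h4 : (v - v⁻¹) • (Ep * Em - Em * Ep) = K - K') :
    Ep ^ 3 * Em - (v ^ 2 + 1 + (v⁻¹) ^ 2) • (Ep ^ 2 * Em * Ep)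
        + (v ^ 2 + 1 + (v⁻¹) ^ 2) • (Ep * Em * Ep ^ 2) - Em * Ep ^ 3 = 0 := by
  set c : F := (v - v⁻¹)⁻¹ with hcdef
  have hc : c * (v - v⁻¹) = 1 := inv_mul_cancel₀ hvv
  have hv2 : (v⁻¹)^2 * v^2 = 1 := by field_simp
  -- commutator rule
  have r1 : Ep * Em = Em * Ep + c • K - c • K' := by
    have := congrArg (fun x => c • x) h4
    simp only [smul_smul, hc, one_smul, smul_sub] at this
    linear_combination (norm := abel) this
  -- Ep K rule
  have r2 : Ep * K = ((v⁻¹) ^ 2) • (K * Ep) := by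
    have := congrArg (fun x => ((v⁻¹)^2) • x) h2
    simp only [smul_smul, hv2, one_smul] at this
    exact this.symm
  -- K' Ep rule, then Ep K' rule
  have hK'Ep : K' * Ep = ((v⁻¹) ^ 2) • (Ep * K') := by
    calc K' * Ep = K' * Ep * (K * K') := by rw [h1, mul_one]
    _ = K' * (Ep * K) * K' := by rw [mul_assoc, mul_assoc, mul_assoc]
    _ = ((v⁻¹)^2) • (K' * (K * Ep) * K') := by rw [r2]; simp [mul_smul_comm, smul_mul_assoc]
    _ = ((v⁻¹)^2) • (Ep * K') := by rw [← mul_assoc, h1', one_mul]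
  have r3 : Ep * K' = (v ^ 2) • (K' * Ep) := by
    have := congrArg (fun x => (v^2) • x) hK'Ep
    simp only [smul_smul] at this
    rw [mul_comm ((v:F)^2)] at this
    simp only [hv2, one_smul] at this
    exact this.symm
  have r1' : ∀ x : A, Ep * (Em * x) = Em * (Ep * x) + c • (K * x) - c • (K' * x) := by
    intro x
    rw [← mul_assoc, r1]; noncomm_ring
  have r2' : ∀ x : A, Ep * (K * x) = ((v⁻¹) ^ 2) • (K * (Ep * x)) := by
    intro x; rw [← mul_assoc, r2]; simp [smul_mul_assoc, mul_assoc]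
  have r3' : ∀ x : A, Ep * (K' * x) = (v ^ 2) • (K' * (Ep * x)) := by
    intro x; rw [← mul_assoc, r3]; simp [smul_mul_assoc, mul_assoc]
  simp only [pow_succ, pow_zero, one_mul, mul_assoc, r1, r1', r2, r2', r3, r3',
    mul_add, add_mul, mul_sub, sub_mul, smul_add, smul_sub, mul_smul_comm,
    smul_mul_assoc, smul_smul]
  match_scalars <;> field_simp <;> ring

/-- In any associative unital algebra `A` over a field `F`, if elements
`E⁺, E⁻, K, K'` satisfy the quantized `sl₂` relations, then both quantum Serre
relations (a) and (b) hold. -/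
theorem stmt0 {F : Type*} [Field F] {A : Type*} [Ring A] [Algebra F A]
    (v : F) (hv : IsUnit v) (hvv : v - v⁻¹ ≠ 0)
    (Ep Em K K' : A)
    (h1 : K * K' = 1) (h1' : K' * K = 1)
    (h2 : K * Ep = (v ^ 2) • (Ep * K))
    (h3 : K * Em = ((v⁻¹) ^ 2) • (Em * K))
    (h4 : (v - v⁻¹) • (Ep * Em - Em * Ep) = K - K') :
    (Ep ^ 3 * Em - (v ^ 2 + 1 + (v⁻¹) ^ 2) • (Ep ^ 2 * Em * Ep)
        + (v ^ 2 + 1 + (v⁻¹) ^ 2) • (Ep * Em * Ep ^ 2) - Em * Ep ^ 3 = 0)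
    ∧ (Em ^ 3 * Ep - (v ^ 2 + 1 + (v⁻¹) ^ 2) • (Em ^ 2 * Ep * Em)
        + (v ^ 2 + 1 + (v⁻¹) ^ 2) • (Em * Ep * Em ^ 2) - Ep * Em ^ 3 = 0) := by
  have hv0 : v ≠ 0 := hv.ne_zero
  have hv0' : v⁻¹ ≠ 0 := inv_ne_zero hv0
  have hvv' : v⁻¹ - (v⁻¹)⁻¹ ≠ 0 := by
    rw [inv_inv]
    intro h
    apply hvv
    linear_combination -h
  constructor
  · exact serre_aux v hv0 hvv Ep Em K K' h1 h1' h2 h4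
  · have h4' : (v⁻¹ - (v⁻¹)⁻¹) • (Em * Ep - Ep * Em) = K - K' := by
      rw [inv_inv]
      have : (v⁻¹ - v) • (Em * Ep - Ep * Em) = (v - v⁻¹) • (Ep * Em - Em * Ep) := by
        rw [← neg_sub v v⁻¹, ← neg_sub (Ep * Em), neg_smul, smul_neg, neg_neg]
      rw [this, h4]
    have key := serre_aux v⁻¹ hv0' hvv' Em Ep K K' h1 h1' h3 h4'
    have hs : (v⁻¹ ^ 2 + 1 + ((v⁻¹)⁻¹) ^ 2) = (v ^ 2 + 1 + (v⁻¹) ^ 2) := by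
      rw [inv_inv]; ring
    rwa [hs] at key
end

section
/- Let ℚ(v) be the field of rational functions over ℚ in an indeterminate v. Let U(sl₂) be the ℚ(v)-algebra presented by generators E, F, K, K' and relations: KK' = 1 = K'K; KE = v²EK; KF = v⁻²FK; (v - v⁻¹)(EF - FE) = K - K'. Let V be the ℚ(v)-algebra presented by generators E⁺, E⁻, K, K' and relations: KK' = 1 = K'K; KE⁺ = v²E⁺K; KE⁻ = v⁻²E⁻K; (v - v⁻¹)(E⁺E⁻ - E⁻E⁺) = K - K'; (E⁺)³E⁻ - (v² + 1 + v⁻²)(E⁺)²E⁻E⁺ + (v² + 1 + v⁻²)E⁺E⁻(E⁺)² - E⁻(E⁺)³ = 0; and (E⁻)³E⁺ - (v² + 1 + v⁻²)(E⁻)²E⁺E⁻ + (v² + 1 + v⁻²)E⁻E⁺(E⁻)² - E⁺(E⁻)³ = 0. Then there is a unique ℚ(v)-algebra isomorphism φ: U(sl₂) → V such that φ(E) = E⁺, φ(F) = E⁻, φ(K) = K, and φ(K') = K'. -/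
open FreeAlgebra

/-- The field ℚ(v) of rational functions over ℚ. -/
abbrev Kv : Type := RatFunc ℚ

/-- The indeterminate `v` of ℚ(v). -/
noncomputable def vv : Kv := RatFunc.X

/-- Generators of the quantized enveloping algebra U(sl₂). -/
inductive UGen | E | F | K | K'

/-- Generators of the algebra V. -/
inductive VGen | Ep | Em | K | K'

/-- Defining relations of U(sl₂). -/
inductive URel : FreeAlgebra Kv UGen → FreeAlgebra Kv UGen → Prop
  | KK' : URel (ι Kv UGen.K * ι Kv UGen.K') 1
  | K'K : URel (ι Kv UGen.K' * ι Kv UGen.K) 1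
  | KE : URel (ι Kv UGen.K * ι Kv UGen.E) (vv ^ 2 • (ι Kv UGen.E * ι Kv UGen.K))
  | KF : URel (ι Kv UGen.K * ι Kv UGen.F) ((vv⁻¹) ^ 2 • (ι Kv UGen.F * ι Kv UGen.K))
  | EF : URel ((vv - vv⁻¹) • (ι Kv UGen.E * ι Kv UGen.F - ι Kv UGen.F * ι Kv UGen.E))
      (ι Kv UGen.K - ι Kv UGen.K')

/-- Defining relations of V. -/
inductive VRel : FreeAlgebra Kv VGen → FreeAlgebra Kv VGen → Prop
  | KK' : VRel (ι Kv VGen.K * ι Kv VGen.K') 1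
  | K'K : VRel (ι Kv VGen.K' * ι Kv VGen.K) 1
  | KE : VRel (ι Kv VGen.K * ι Kv VGen.Ep) (vv ^ 2 • (ι Kv VGen.Ep * ι Kv VGen.K))
  | KF : VRel (ι Kv VGen.K * ι Kv VGen.Em) ((vv⁻¹) ^ 2 • (ι Kv VGen.Em * ι Kv VGen.K))
  | EF : VRel ((vv - vv⁻¹) • (ι Kv VGen.Ep * ι Kv VGen.Em - ι Kv VGen.Em * ι Kv VGen.Ep))
      (ι Kv VGen.K - ι Kv VGen.K')
  | serreA : VRel
      (ι Kv VGen.Ep ^ 3 * ι Kv VGen.Em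
        - (vv ^ 2 + 1 + (vv⁻¹) ^ 2) • (ι Kv VGen.Ep ^ 2 * ι Kv VGen.Em * ι Kv VGen.Ep)
        + (vv ^ 2 + 1 + (vv⁻¹) ^ 2) • (ι Kv VGen.Ep * ι Kv VGen.Em * ι Kv VGen.Ep ^ 2)
        - ι Kv VGen.Em * ι Kv VGen.Ep ^ 3) 0
  | serreB : VRel
      (ι Kv VGen.Em ^ 3 * ι Kv VGen.Ep
        - (vv ^ 2 + 1 + (vv⁻¹) ^ 2) • (ι Kv VGen.Em ^ 2 * ι Kv VGen.Ep * ι Kv VGen.Em)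
        + (vv ^ 2 + 1 + (vv⁻¹) ^ 2) • (ι Kv VGen.Em * ι Kv VGen.Ep * ι Kv VGen.Em ^ 2)
        - ι Kv VGen.Ep * ι Kv VGen.Em ^ 3) 0

lemma vv_ne_zero : vv ≠ 0 := RatFunc.X_ne_zero

lemma w_ne_zero : vv - vv⁻¹ ≠ 0 := by
  intro h
  have hv : vv = vv⁻¹ := sub_eq_zero.mp h
  have h2 : vv * vv = 1 := by
    nth_rewrite 2 [hv]
    exact mul_inv_cancel₀ vv_ne_zero
  have h3 : (Polynomial.X : Polynomial ℚ) * Polynomial.X = 1 := by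
    apply RatFunc.algebraMap_injective ℚ
    simpa [vv, RatFunc.algebraMap_X] using h2
  have := congrArg (Polynomial.eval 0) h3
  simp at this

lemma inv_sq_mul_sq : (vv⁻¹ : Kv) ^ 2 * vv ^ 2 = 1 := by
  rw [← mul_pow, inv_mul_cancel₀ vv_ne_zero, one_pow]

lemma sq_mul_inv_sq : (vv : Kv) ^ 2 * vv⁻¹ ^ 2 = 1 := by
  rw [← mul_pow, mul_inv_cancel₀ vv_ne_zero, one_pow]

section
variable {A : Type*} [Ring A] [Algebra Kv A]

lemma conj_aux {k k' x : A} (h1 : k * k' = 1) (h2 : k' * k = 1)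
    {s : Kv} (h : k * x = s • (x * k)) : x * k' = s • (k' * x) := by
  have h2' : ∀ y : A, k' * (k * y) = y := fun y => by rw [← mul_assoc, h2, one_mul]
  calc x * k' = k' * (k * (x * k')) := (h2' _).symm
    _ = k' * ((k * x) * k') := by rw [mul_assoc]
    _ = k' * ((s • (x * k)) * k') := by rw [h]
    _ = s • (k' * (x * (k * k'))) := by
        simp only [smul_mul_assoc, mul_smul_comm, mul_assoc]
    _ = s • (k' * x) := by rw [h1, mul_one]

lemma serre (e f k k' : A)
    (h1 : k * k' = 1) (h2 : k' * k = 1)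
    (h3 : k * e = vv ^ 2 • (e * k))
    (h5 : (vv - vv⁻¹) • (e * f - f * e) = k - k') :
    e ^ 3 * f - (vv ^ 2 + 1 + (vv⁻¹) ^ 2) • (e ^ 2 * f * e)
      + (vv ^ 2 + 1 + (vv⁻¹) ^ 2) • (e * f * e ^ 2) - f * e ^ 3 = 0 := by
  have hw : (vv - vv⁻¹) ≠ 0 := w_ne_zero
  set w : Kv := vv - vv⁻¹ with hwdef
  set d : A := w⁻¹ • (k - k') with hd
  set d1 : A := w⁻¹ • ((vv⁻¹) ^ 2 • k - vv ^ 2 • k') with hd1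
  set d2 : A := w⁻¹ • ((vv⁻¹) ^ 4 • k - vv ^ 4 • k') with hd2
  have hek : e * k = (vv⁻¹) ^ 2 • (k * e) := by
    rw [h3, smul_smul, inv_sq_mul_sq, one_smul]
  have hek' : e * k' = vv ^ 2 • (k' * e) := conj_aux h1 h2 h3
  have hef : e * f = f * e + d := by
    have h' : e * f - f * e = d := by
      rw [hd, ← h5, smul_smul, inv_mul_cancel₀ hw, one_smul]
    rw [sub_eq_iff_eq_add.mp h', add_comm]
  have hed : e * d = d1 * e := by
    rw [hd, hd1, mul_smul_comm, smul_mul_assoc]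
    congr 1
    rw [mul_sub, sub_mul, hek, hek', smul_mul_assoc, smul_mul_assoc]
  have hed1 : e * d1 = d2 * e := by
    rw [hd1, hd2, mul_smul_comm, smul_mul_assoc]
    congr 1
    rw [mul_sub, sub_mul, mul_smul_comm, mul_smul_comm, hek, hek',
      smul_smul, smul_smul, smul_mul_assoc, smul_mul_assoc,
      show (vv⁻¹ : Kv) ^ 2 * vv⁻¹ ^ 2 = vv⁻¹ ^ 4 from by ring,
      show (vv : Kv) ^ 2 * vv ^ 2 = vv ^ 4 from by ring]
  have core : (k - k') + ((vv⁻¹) ^ 4 • k - vv ^ 4 • k')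
      = (vv ^ 2 + (vv⁻¹) ^ 2) • ((vv⁻¹) ^ 2 • k - vv ^ 2 • k') := by
    rw [smul_sub, smul_smul, smul_smul]
    have s1 : ((vv : Kv) ^ 2 + vv⁻¹ ^ 2) * vv⁻¹ ^ 2 = 1 + vv⁻¹ ^ 4 := by
      rw [add_mul, sq_mul_inv_sq]; ring
    have s2 : ((vv : Kv) ^ 2 + vv⁻¹ ^ 2) * vv ^ 2 = vv ^ 4 + 1 := by
      rw [add_mul, inv_sq_mul_sq]; ring
    rw [s1, s2, add_smul, add_smul, one_smul, one_smul]
    abel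
  have hsum : d + d2 = (vv ^ 2 + (vv⁻¹) ^ 2) • d1 := by
    rw [hd, hd1, hd2, ← smul_add, core, smul_comm]
  have he2f : e * (e * f) = f * (e * e) + d * e + d1 * e := by
    calc e * (e * f) = e * (f * e + d) := by rw [hef]
      _ = (e * f) * e + e * d := by rw [mul_add, ← mul_assoc]
      _ = (f * e + d) * e + d1 * e := by rw [hef, hed]
      _ = f * (e * e) + d * e + d1 * e := by noncomm_ring
  have he3f : e * (e * (e * f))
      = f * (e * (e * e)) + d * (e * e) + d1 * (e * e) + d2 * (e * e) := by
    calc e * (e * (e * f)) = e * (f * (e * e) + d * e + d1 * e) := by rw [he2f]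
      _ = (e * f) * (e * e) + (e * d) * e + (e * d1) * e := by noncomm_ring
      _ = (f * e + d) * (e * e) + (d1 * e) * e + (d2 * e) * e := by rw [hef, hed, hed1]
      _ = f * (e * (e * e)) + d * (e * e) + d1 * (e * e) + d2 * (e * e) := by noncomm_ring
  have he2fe : (e * (e * f)) * e = f * (e * (e * e)) + d * (e * e) + d1 * (e * e) := by
    rw [he2f]; noncomm_ring
  have hefe2 : (e * f) * (e * e) = f * (e * (e * e)) + d * (e * e) := by
    rw [hef]; noncomm_ring
  have hp3 : e ^ 3 * f = e * (e * (e * f)) := by noncomm_ring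
  have hp2 : e ^ 2 * f * e = (e * (e * f)) * e := by noncomm_ring
  have hp1 : e * f * e ^ 2 = (e * f) * (e * e) := by noncomm_ring
  have hp0 : f * e ^ 3 = f * (e * (e * e)) := by noncomm_ring
  rw [hp3, hp2, hp1, hp0, he3f, he2fe, hefe2]
  have key : d * (e * e) + d2 * (e * e)
      = vv ^ 2 • (d1 * (e * e)) + (vv⁻¹) ^ 2 • (d1 * (e * e)) := by
    rw [← add_mul, hsum, smul_mul_assoc, add_smul]
  simp only [smul_add, add_smul, one_smul]
  calc f * (e * (e * e)) + d * (e * e) + d1 * (e * e) + d2 * (e * e)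
        - (vv ^ 2 • (f * (e * (e * e))) + f * (e * (e * e)) + vv⁻¹ ^ 2 • (f * (e * (e * e)))
          + (vv ^ 2 • (d * (e * e)) + d * (e * e) + vv⁻¹ ^ 2 • (d * (e * e)))
          + (vv ^ 2 • (d1 * (e * e)) + d1 * (e * e) + vv⁻¹ ^ 2 • (d1 * (e * e))))
        + (vv ^ 2 • (f * (e * (e * e))) + f * (e * (e * e)) + vv⁻¹ ^ 2 • (f * (e * (e * e)))
          + (vv ^ 2 • (d * (e * e)) + d * (e * e) + vv⁻¹ ^ 2 • (d * (e * e))))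
        - f * (e * (e * e))
      = (d * (e * e) + d2 * (e * e))
        - (vv ^ 2 • (d1 * (e * e)) + (vv⁻¹) ^ 2 • (d1 * (e * e))) := by abel
    _ = 0 := by rw [key, sub_self]

end

noncomputable section

abbrev uE : RingQuot URel := RingQuot.mkAlgHom Kv URel (ι Kv UGen.E)
abbrev uF : RingQuot URel := RingQuot.mkAlgHom Kv URel (ι Kv UGen.F)
abbrev uK : RingQuot URel := RingQuot.mkAlgHom Kv URel (ι Kv UGen.K)
abbrev uK' : RingQuot URel := RingQuot.mkAlgHom Kv URel (ι Kv UGen.K')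

lemma rel_u {x y} (h : URel x y) :
    RingQuot.mkAlgHom Kv URel x = RingQuot.mkAlgHom Kv URel y :=
  RingQuot.mkAlgHom_rel Kv h

lemma uKK' : uK * uK' = 1 := by simpa using rel_u URel.KK'
lemma uK'K : uK' * uK = 1 := by simpa using rel_u URel.K'K
lemma uKE : uK * uE = vv ^ 2 • (uE * uK) := by simpa using rel_u URel.KE
lemma uKF : uK * uF = (vv⁻¹) ^ 2 • (uF * uK) := by simpa using rel_u URel.KF
lemma uEF : (vv - vv⁻¹) • (uE * uF - uF * uE) = uK - uK' := by simpa using rel_u URel.EF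

lemma uK'F : uK' * uF = vv ^ 2 • (uF * uK') := by
  have h := conj_aux uKK' uK'K uKF
  rw [h, smul_smul, sq_mul_inv_sq, one_smul]

lemma uFE : (vv - vv⁻¹) • (uF * uE - uE * uF) = uK' - uK := by
  rw [show uF * uE - uE * uF = -(uE * uF - uF * uE) from (neg_sub _ _).symm,
    smul_neg, uEF, neg_sub]

lemma serreUA : uE ^ 3 * uF - (vv ^ 2 + 1 + (vv⁻¹) ^ 2) • (uE ^ 2 * uF * uE)
    + (vv ^ 2 + 1 + (vv⁻¹) ^ 2) • (uE * uF * uE ^ 2) - uF * uE ^ 3 = 0 :=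
  serre uE uF uK uK' uKK' uK'K uKE uEF

lemma serreUB : uF ^ 3 * uE - (vv ^ 2 + 1 + (vv⁻¹) ^ 2) • (uF ^ 2 * uE * uF)
    + (vv ^ 2 + 1 + (vv⁻¹) ^ 2) • (uF * uE * uF ^ 2) - uE * uF ^ 3 = 0 :=
  serre uF uE uK' uK uK'K uKK' uK'F uFE

def fUV : FreeAlgebra Kv UGen →ₐ[Kv] RingQuot VRel :=
  FreeAlgebra.lift Kv fun g => match g with
  | UGen.E => RingQuot.mkAlgHom Kv VRel (ι Kv VGen.Ep)
  | UGen.F => RingQuot.mkAlgHom Kv VRel (ι Kv VGen.Em)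
  | UGen.K => RingQuot.mkAlgHom Kv VRel (ι Kv VGen.K)
  | UGen.K' => RingQuot.mkAlgHom Kv VRel (ι Kv VGen.K')

def fVU : FreeAlgebra Kv VGen →ₐ[Kv] RingQuot URel :=
  FreeAlgebra.lift Kv fun g => match g with
  | VGen.Ep => uE
  | VGen.Em => uF
  | VGen.K => uK
  | VGen.K' => uK'

lemma fUV_resp : ∀ ⦃x y⦄, URel x y → fUV x = fUV y := by
  intro x y h
  induction h with
  | KK' => simpa [fUV] using RingQuot.mkAlgHom_rel Kv VRel.KK'
  | K'K => simpa [fUV] using RingQuot.mkAlgHom_rel Kv VRel.K'K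
  | KE => simpa [fUV] using RingQuot.mkAlgHom_rel Kv VRel.KE
  | KF => simpa [fUV] using RingQuot.mkAlgHom_rel Kv VRel.KF
  | EF => simpa [fUV] using RingQuot.mkAlgHom_rel Kv VRel.EF

lemma fVU_resp : ∀ ⦃x y⦄, VRel x y → fVU x = fVU y := by
  intro x y h
  induction h with
  | KK' => simpa [fVU] using uKK'
  | K'K => simpa [fVU] using uK'K
  | KE => simpa [fVU] using uKE
  | KF => simpa [fVU] using uKF
  | EF => simpa [fVU] using uEF
  | serreA => simpa [fVU] using serreUA
  | serreB => simpa [fVU] using serreUB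

def φUV : RingQuot URel →ₐ[Kv] RingQuot VRel := RingQuot.liftAlgHom Kv ⟨fUV, fUV_resp⟩
def φVU : RingQuot VRel →ₐ[Kv] RingQuot URel := RingQuot.liftAlgHom Kv ⟨fVU, fVU_resp⟩

lemma comp_UVU : φVU.comp φUV = AlgHom.id Kv (RingQuot URel) := by
  apply RingQuot.ringQuot_ext'
  apply FreeAlgebra.hom_ext
  funext g
  cases g <;>
    simp [φUV, φVU, fUV, fVU, RingQuot.liftAlgHom_mkAlgHom_apply]

lemma comp_VUV : φUV.comp φVU = AlgHom.id Kv (RingQuot VRel) := by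
  apply RingQuot.ringQuot_ext'
  apply FreeAlgebra.hom_ext
  funext g
  cases g <;>
    simp [φUV, φVU, fUV, fVU, RingQuot.liftAlgHom_mkAlgHom_apply]

def Φ : RingQuot URel ≃ₐ[Kv] RingQuot VRel := AlgEquiv.ofAlgHom φUV φVU comp_VUV comp_UVU

end

/-- There is a unique ℚ(v)-algebra isomorphism φ : U(sl₂) → V with
φ(E) = E⁺, φ(F) = E⁻, φ(K) = K and φ(K') = K'. -/
theorem stmt1 :
    ∃! φ : RingQuot URel ≃ₐ[Kv] RingQuot VRel,
      φ (RingQuot.mkAlgHom Kv URel (ι Kv UGen.E)) = RingQuot.mkAlgHom Kv VRel (ι Kv VGen.Ep) ∧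
      φ (RingQuot.mkAlgHom Kv URel (ι Kv UGen.F)) = RingQuot.mkAlgHom Kv VRel (ι Kv VGen.Em) ∧
      φ (RingQuot.mkAlgHom Kv URel (ι Kv UGen.K)) = RingQuot.mkAlgHom Kv VRel (ι Kv VGen.K) ∧
      φ (RingQuot.mkAlgHom Kv URel (ι Kv UGen.K')) = RingQuot.mkAlgHom Kv VRel (ι Kv VGen.K') := by
  refine ⟨Φ, ⟨?_, ?_, ?_, ?_⟩, ?_⟩
  · show φUV _ = _
    simp [φUV, fUV, RingQuot.liftAlgHom_mkAlgHom_apply]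
  · show φUV _ = _
    simp [φUV, fUV, RingQuot.liftAlgHom_mkAlgHom_apply]
  · show φUV _ = _
    simp [φUV, fUV, RingQuot.liftAlgHom_mkAlgHom_apply]
  · show φUV _ = _
    simp [φUV, fUV, RingQuot.liftAlgHom_mkAlgHom_apply]
  · rintro χ ⟨hE, hF, hK, hK'⟩
    have hhom : (χ : RingQuot URel →ₐ[Kv] RingQuot VRel) = φUV := by
      apply RingQuot.ringQuot_ext'
      apply FreeAlgebra.hom_ext
      funext g
      cases g <;>
        simp [φUV, fUV, RingQuot.liftAlgHom_mkAlgHom_apply, hE, hF, hK, hK']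
    apply AlgEquiv.ext
    intro x
    exact AlgHom.congr_fun hhom x
end

section
/- Let n be a positive integer, F a field, and v a unit of F such that the balanced quantum integers [t] = (v^t - v^{-t})/(v - v^{-1}) are nonzero for 1 ≤ t ≤ 2n+1 (so the quantum binomial coefficients [2n+1 choose p] are defined). Let A be an associative unital F-algebra containing elements E⁺, E⁻, K, K' satisfying: K·K' = 1 = K'·K; K·E⁺ = v²·E⁺·K; K·E⁻ = v⁻²·E⁻·K; and (v - v⁻¹)·(E⁺·E⁻ - E⁻·E⁺) = K - K'. Then the higher quantum Serre relations hold: Σ_{p=0}^{2n+1} (-1)^p [2n+1 choose p] (E⁺)^p E⁻ (E⁺)^{2n+1-p} = 0 and Σ_{p=0}^{2n+1} (-1)^p [2n+1 choose p] (E⁻)^p E⁺ (E⁻)^{2n+1-p} = 0. -/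
/-- Balanced quantum integer `[m] = (v^m - v^{-m})/(v - v⁻¹)`. -/
noncomputable def qint {F : Type*} [Field F] (v : F) (m : ℤ) : F :=
  (v ^ m - v ^ (-m)) / (v - v⁻¹)

/-- Quantum factorial `[m]! = ∏_{t=1}^m [t]`. -/
noncomputable def qfact {F : Type*} [Field F] (v : F) : ℕ → F
  | 0 => 1
  | m + 1 => qfact v m * qint v (m + 1)

/-- Quantum binomial coefficient `[m choose t] = [m]!/([t]![m-t]!)`. -/
noncomputable def qbinom {F : Type*} [Field F] (v : F) (m t : ℕ) : F :=
  qfact v m / (qfact v t * qfact v (m - t))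

section Scalar
variable {F : Type*} [Field F]

/-- Pascal-recursion q-binomial, zero outside range. -/
noncomputable def Bq (v : F) : ℕ → ℕ → F
  | 0, 0 => 1
  | 0, _+1 => 0
  | _+1, 0 => 1
  | M+1, p+1 => (v⁻¹)^(p+1) * Bq v M (p+1) + v^(M+1) * (v⁻¹)^(p+1) * Bq v M p

lemma Bq_zero_right (v : F) (M : ℕ) : Bq v M 0 = 1 := by cases M <;> rfl

lemma Bq_eq_zero (v : F) : ∀ M p : ℕ, M < p → Bq v M p = 0 := by
  intro M
  induction M with
  | zero => intro p hp; match p, hp with | p+1, _ => rfl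
  | succ M ih =>
    intro p hp
    match p, hp with
    | p+1, hp =>
      show (v⁻¹)^(p+1) * Bq v M (p+1) + v^(M+1) * (v⁻¹)^(p+1) * Bq v M p = 0
      rw [ih (p+1) (by omega), ih p (by omega)]
      ring

noncomputable def Tq (v : F) (M : ℕ) (x : F) : F :=
  ∑ p ∈ Finset.range (M+1), (-1:F)^p * x^p * Bq v M p

lemma Tq_succ (v : F) (M : ℕ) (x : F) :
    Tq v (M+1) x = (1 - x * v⁻¹ * v^(M+1)) * Tq v M (x * v⁻¹) := by
  rw [Tq, Finset.sum_range_succ']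
  have h0 : (-1:F)^0 * x^0 * Bq v (M+1) 0 = 1 := by simp [Bq_zero_right]
  rw [h0]
  have hterm : ∀ q ∈ Finset.range (M+1),
      (-1:F)^(q+1) * x^(q+1) * Bq v (M+1) (q+1)
      = (-(-1:F)^q * (x*v⁻¹)^q * (x*v⁻¹)) * Bq v M (q+1)
        + (-(x * v⁻¹ * v^(M+1))) * ((-1:F)^q * (x*v⁻¹)^q * Bq v M q) := by
    intro q _
    show (-1:F)^(q+1) * x^(q+1) * ((v⁻¹)^(q+1) * Bq v M (q+1) + v^(M+1) * (v⁻¹)^(q+1) * Bq v M q) = _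
    ring
  rw [Finset.sum_congr rfl hterm, Finset.sum_add_distrib, ← Finset.mul_sum]
  have key : ∑ q ∈ Finset.range (M+1), (-(-1:F)^q * (x*v⁻¹)^q * (x*v⁻¹)) * Bq v M (q+1)
      = Tq v M (x*v⁻¹) - 1 := by
    rw [Finset.sum_range_succ, Bq_eq_zero v M (M+1) (by omega), mul_zero, add_zero,
      Tq, Finset.sum_range_succ']
    rw [Finset.sum_congr rfl (fun q _ => by ring : ∀ q ∈ Finset.range M,
      (-(-1:F)^q * (x*v⁻¹)^q * (x*v⁻¹)) * Bq v M (q+1)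
        = (-1:F)^(q+1) * (x*v⁻¹)^(q+1) * Bq v M (q+1))]
    simp [Bq_zero_right]
  rw [key, ← Tq]
  ring

lemma Tq_vanish (v : F) (huv : v * v⁻¹ = 1) :
    ∀ M j : ℕ, j ≤ M → Tq v (M+1) (v^(M-j) * (v⁻¹)^j) = 0 := by
  intro M
  induction M with
  | zero =>
    intro j hj
    interval_cases j
    rw [Tq_succ]
    have : (1 : F) - v^(0-0) * (v⁻¹)^0 * v⁻¹ * v^(0+1) = 0 := by
      simp only [Nat.sub_self, pow_zero, pow_one, one_mul]; linear_combination -huv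
    rw [this, zero_mul]
  | succ M ih =>
    intro j hj
    rw [Tq_succ]
    rcases eq_or_lt_of_le hj with rfl | hlt
    · have : (1:F) - v ^ (M+1-(M+1)) * (v⁻¹)^(M+1) * v⁻¹ * v^(M+1+1) = 0 := by
        have h2 : v^(M+2) * (v⁻¹)^(M+2) = 1 := by
          rw [← mul_pow, huv, one_pow]
        simp only [Nat.sub_self, pow_zero, one_mul]
        calc (1:F) - (v⁻¹)^(M+1) * v⁻¹ * v^(M+1+1)
            = 1 - v^(M+2) * (v⁻¹)^(M+2) := by ring
          _ = 0 := by rw [h2]; ring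
      rw [this, zero_mul]
    · have hjM : j ≤ M := by omega
      have harg : v ^ (M+1-j) * (v⁻¹)^j * v⁻¹ = v ^ (M-j) * (v⁻¹)^j := by
        have : M+1-j = (M-j)+1 := by omega
        rw [this, pow_succ]
        calc v ^ (M-j) * v * (v⁻¹)^j * v⁻¹ = v^(M-j) * (v⁻¹)^j * (v * v⁻¹) := by ring
          _ = v ^ (M-j) * (v⁻¹)^j := by rw [huv, mul_one]
      rw [harg, ih j hjM, mul_zero]

lemma qint_eq (v : F) (t : ℕ) :
    qint v (t : ℤ) = (v^t - (v⁻¹)^t) / (v - v⁻¹) := by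
  simp [qint, zpow_natCast, inv_pow]

lemma qfact_succ (v : F) (m : ℕ) :
    qfact v (m+1) = qfact v m * qint v ((m+1 : ℕ) : ℤ) := by
  rw [qfact]; push_cast; ring_nf

lemma qfact_ne_zero (v : F) : ∀ m : ℕ,
    (∀ t : ℕ, 1 ≤ t → t ≤ m → qint v (t : ℤ) ≠ 0) → qfact v m ≠ 0 := by
  intro m
  induction m with
  | zero => intro _; simp [qfact]
  | succ m ih =>
    intro h
    rw [qfact_succ]
    exact mul_ne_zero (ih fun t h1 h2 => h t h1 (by omega)) (h (m+1) (by omega) le_rfl)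

lemma key_num (v : F) (huv : v * v⁻¹ = 1) (p k : ℕ) :
    v^(p+1+k+1) - (v⁻¹)^(p+1+k+1)
      = (v⁻¹)^(p+1) * (v^(k+1) - (v⁻¹)^(k+1))
        + v^(p+1+k+1) * (v⁻¹)^(p+1) * (v^(p+1) - (v⁻¹)^(p+1)) := by
  have h' : v^(p+1) * (v⁻¹)^(p+1) = 1 := by rw [← mul_pow, huv, one_pow]
  linear_combination ((v⁻¹)^(p+1) * v^(k+1) - v^(p+1+k+1)) * h'

lemma qint_rec (v : F) (huv : v * v⁻¹ = 1) (p k : ℕ) :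
    qint v ((p+1+k+1 : ℕ) : ℤ)
      = (v⁻¹)^(p+1) * qint v ((k+1 : ℕ) : ℤ)
        + v^(p+1+k+1) * (v⁻¹)^(p+1) * qint v ((p+1 : ℕ) : ℤ) := by
  rw [qint_eq, qint_eq, qint_eq, key_num v huv p k]
  ring

lemma qbinom_zero (v : F) (M : ℕ) (h : qfact v M ≠ 0) : qbinom v M 0 = 1 := by
  rw [qbinom, qfact]
  simp [div_self h]

lemma qbinom_self (v : F) (M : ℕ) (h : qfact v M ≠ 0) : qbinom v M M = 1 := by
  rw [qbinom, Nat.sub_self]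
  show qfact v M / (qfact v M * qfact v 0) = 1
  rw [qfact]
  simp [div_self h]

lemma Bq_eq_qbinom (v : F) (huv : v * v⁻¹ = 1) : ∀ M : ℕ,
    (∀ t : ℕ, 1 ≤ t → t ≤ M → qint v (t : ℤ) ≠ 0) →
    ∀ p : ℕ, p ≤ M → Bq v M p = qbinom v M p := by
  intro M
  induction M with
  | zero =>
    intro _ p hp
    interval_cases p
    rw [Bq_zero_right, qbinom_zero v 0 (by simp [qfact])]
  | succ M ih =>
    intro hq p hp
    have hfM1 : qfact v (M+1) ≠ 0 := qfact_ne_zero v (M+1) hq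
    have hqM : ∀ t : ℕ, 1 ≤ t → t ≤ M → qint v (t : ℤ) ≠ 0 :=
      fun t h1 h2 => hq t h1 (by omega)
    have hfM : qfact v M ≠ 0 := qfact_ne_zero v M hqM
    match p, hp with
    | 0, _ => rw [Bq_zero_right, qbinom_zero v (M+1) hfM1]
    | p+1, hp =>
      rcases eq_or_lt_of_le hp with heq | hlt
      · -- p + 1 = M + 1
        have hpM : p = M := by omega
        subst hpM
        show (v⁻¹)^(p+1) * Bq v p (p+1) + v^(p+1) * (v⁻¹)^(p+1) * Bq v p p = _
        rw [Bq_eq_zero v p (p+1) (by omega), ih hqM p le_rfl,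
          qbinom_self v p (qfact_ne_zero v p hqM)]
        have h' : v^(p+1) * (v⁻¹)^(p+1) = 1 := by rw [← mul_pow, huv, one_pow]
        rw [qbinom_self v (p+1) hfM1]
        linear_combination h'
      · -- p + 1 ≤ M
        have hpM : p + 1 ≤ M := by omega
        obtain ⟨k, rfl⟩ : ∃ k, M = p+1+k := ⟨M - (p+1), by omega⟩
        show (v⁻¹)^(p+1) * Bq v (p+1+k) (p+1) + v^(p+1+k+1) * (v⁻¹)^(p+1) * Bq v (p+1+k) p = _
        rw [ih hqM (p+1) (by omega), ih hqM p (by omega)]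
        -- now the pure field identity
        have hfp : qfact v p ≠ 0 := qfact_ne_zero v p (fun t h1 h2 => hq t h1 (by omega))
        have hfk : qfact v k ≠ 0 := qfact_ne_zero v k (fun t h1 h2 => hq t h1 (by omega))
        have hX : qfact v (p+1+k) ≠ 0 := qfact_ne_zero v (p+1+k) hqM
        have hip : qint v ((p+1 : ℕ) : ℤ) ≠ 0 := hq (p+1) (by omega) (by omega)
        have hik : qint v ((k+1 : ℕ) : ℤ) ≠ 0 := hq (k+1) (by omega) (by omega)
        have e1 : p+1+k - (p+1) = k := by omega
        have e2 : p+1+k - p = k+1 := by omega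
        have e3 : p+1+k+1 - (p+1) = k+1 := by omega
        rw [qbinom, qbinom, qbinom, e1, e2, e3]
        rw [qfact_succ v (p+1+k), qint_rec v huv p k,
          qfact_succ v p, qfact_succ v k]
        have hcol : v^(p+1+k+1) * (v⁻¹)^(p+1) = v^(k+1) := by
          rw [show p+1+k+1 = (k+1)+(p+1) from by omega, pow_add, mul_assoc,
            ← mul_pow, huv, one_pow, mul_one]
        simp only [hcol]
        set Qp := qint v ((p+1 : ℕ) : ℤ) with hQp
        set Qk := qint v ((k+1 : ℕ) : ℤ) with hQk
        set Af := qfact v p with hAf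
        set Bf := qfact v k with hBf
        set X := qfact v (p+1+k) with hXf
        set U := (v⁻¹)^(p+1) with hU
        field_simp

noncomputable def ca (v : F) (m : ℕ) : F := ∑ j ∈ Finset.range m, v^(2*j)
noncomputable def cb (v : F) (m : ℕ) : F := ∑ j ∈ Finset.range m, (v⁻¹)^(2*j)

lemma ca_mul (v : F) (huv : v * v⁻¹ = 1) (m : ℕ) :
    (v - v⁻¹) * ca v m = v⁻¹ * (v^(2*m) - 1) := by
  induction m with
  | zero => simp [ca]
  | succ m ih =>
    rw [ca, Finset.sum_range_succ, ← ca]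
    have h2 : v^(2*(m+1)) = v^(2*m) * v * v := by
      rw [show 2*(m+1) = 2*m+1+1 from by omega, pow_succ, pow_succ]
    rw [h2]
    linear_combination ih - v^(2*m)*v*huv

lemma cb_mul (v : F) (huv : v * v⁻¹ = 1) (m : ℕ) :
    (v - v⁻¹) * cb v m = v * (1 - (v⁻¹)^(2*m)) := by
  induction m with
  | zero => simp [cb]
  | succ m ih =>
    rw [cb, Finset.sum_range_succ, ← cb]
    have h2 : (v⁻¹)^(2*(m+1)) = (v⁻¹)^(2*m) * v⁻¹ * v⁻¹ := by
      rw [show 2*(m+1) = 2*m+1+1 from by omega, pow_succ, pow_succ]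
    rw [h2]
    linear_combination ih + (v⁻¹)^(2*m)*v⁻¹*huv

lemma pow_cancel (v : F) (huv : v * v⁻¹ = 1) (m : ℕ) : v^m * (v⁻¹)^m = 1 := by
  rw [← mul_pow, huv, one_pow]

lemma Tq_one (v : F) (huv : v * v⁻¹ = 1) (n : ℕ) : Tq v (2*n+1) 1 = 0 := by
  have h := Tq_vanish v huv (2*n) n (by omega)
  rwa [show 2*n-n = n from by omega, pow_cancel v huv n] at h

lemma Tq_u2 (v : F) (huv : v * v⁻¹ = 1) (n : ℕ) (hn : 0 < n) :
    Tq v (2*n+1) (v⁻¹ * v⁻¹) = 0 := by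
  have h := Tq_vanish v huv (2*n) (n+1) (by omega)
  have harg : v^(2*n-(n+1)) * (v⁻¹)^(n+1) = v⁻¹ * v⁻¹ := by
    rw [show 2*n-(n+1) = n-1 from by omega, show n+1 = (n-1)+2 from by omega, pow_add,
      ← mul_assoc, pow_cancel v huv (n-1)]
    ring
  rwa [harg] at h

lemma Tq_v2 (v : F) (huv : v * v⁻¹ = 1) (n : ℕ) (hn : 0 < n) :
    Tq v (2*n+1) (v * v) = 0 := by
  have h := Tq_vanish v huv (2*n) (n-1) (by omega)
  have harg : v^(2*n-(n-1)) * (v⁻¹)^(n-1) = v * v := by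
    rw [show 2*n-(n-1) = (n-1)+2 from by omega, pow_add, mul_comm (v^(n-1)) (v^2),
      mul_assoc, pow_cancel v huv (n-1)]
    ring
  rwa [harg] at h

lemma Fsum1 (v : F) (huv : v * v⁻¹ = 1) (n : ℕ)
    (hq : ∀ t : ℕ, 1 ≤ t → t ≤ 2*n+1 → qint v (t : ℤ) ≠ 0) :
    ∑ p ∈ Finset.range (2*n+2), (-1:F)^p * qbinom v (2*n+1) p = 0 := by
  have h : ∑ p ∈ Finset.range (2*n+2), (-1:F)^p * qbinom v (2*n+1) p
      = Tq v (2*n+1) 1 := by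
    rw [Tq]
    refine Finset.sum_congr rfl fun p hp => ?_
    have hpN : p ≤ 2*n+1 := by have := Finset.mem_range.mp hp; omega
    rw [Bq_eq_qbinom v huv (2*n+1) hq p hpN]
    ring
  rw [h]
  exact Tq_one v huv n

lemma Fsum2 (v : F) (huv : v * v⁻¹ = 1) (hw : v - v⁻¹ ≠ 0) (n : ℕ) (hn : 0 < n)
    (hq : ∀ t : ℕ, 1 ≤ t → t ≤ 2*n+1 → qint v (t : ℤ) ≠ 0) :
    ∑ p ∈ Finset.range (2*n+2),
      ((-1:F)^p * qbinom v (2*n+1) p) * ca v p * v^(2*(2*n+1-p)) = 0 := by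
  have key : ∀ p ∈ Finset.range (2*n+2),
      (v - v⁻¹) * (((-1:F)^p * qbinom v (2*n+1) p) * ca v p * v^(2*(2*n+1-p)))
      = v⁻¹ * v^(2*(2*n+1)) * ((-1:F)^p * (1:F)^p * Bq v (2*n+1) p)
        - v⁻¹ * v^(2*(2*n+1)) * ((-1:F)^p * (v⁻¹*v⁻¹)^p * Bq v (2*n+1) p) := by
    intro p hp
    have hpN : p ≤ 2*n+1 := by have := Finset.mem_range.mp hp; omega
    rw [← Bq_eq_qbinom v huv (2*n+1) hq p hpN]
    have hsplit : v^(2*(2*n+1-p)) = v^(2*(2*n+1)) * (v⁻¹)^(2*p) := by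
      have h1 : v^(2*(2*n+1-p)) * (v^(2*p) * (v⁻¹)^(2*p)) = v^(2*(2*n+1)) * (v⁻¹)^(2*p) := by
        rw [← mul_assoc, ← pow_add, show 2*(2*n+1-p) + 2*p = 2*(2*n+1) from by omega]
      rwa [pow_cancel v huv (2*p), mul_one] at h1
    rw [hsplit]
    linear_combination ((-1:F)^p * Bq v (2*n+1) p * v^(2*(2*n+1)) * (v⁻¹)^(2*p)) * (ca_mul v huv p)
      + ((-1:F)^p * Bq v (2*n+1) p * v⁻¹ * v^(2*(2*n+1))) * (pow_cancel v huv (2*p))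
  have h2 : (v - v⁻¹) * (∑ p ∈ Finset.range (2*n+2),
      ((-1:F)^p * qbinom v (2*n+1) p) * ca v p * v^(2*(2*n+1-p)))
      = v⁻¹ * v^(2*(2*n+1)) * Tq v (2*n+1) 1
        - v⁻¹ * v^(2*(2*n+1)) * Tq v (2*n+1) (v⁻¹*v⁻¹) := by
    rw [Finset.mul_sum, Tq, Tq, Finset.mul_sum, Finset.mul_sum, ← Finset.sum_sub_distrib]
    exact Finset.sum_congr rfl key
  rw [Tq_one v huv n, Tq_u2 v huv n hn, mul_zero, sub_self] at h2
  rcases mul_eq_zero.mp h2 with h | h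
  · exact absurd h hw
  · exact h

lemma Fsum3 (v : F) (huv : v * v⁻¹ = 1) (hw : v - v⁻¹ ≠ 0) (n : ℕ) (hn : 0 < n)
    (hq : ∀ t : ℕ, 1 ≤ t → t ≤ 2*n+1 → qint v (t : ℤ) ≠ 0) :
    ∑ p ∈ Finset.range (2*n+2),
      ((-1:F)^p * qbinom v (2*n+1) p) * cb v p * (v⁻¹)^(2*(2*n+1-p)) = 0 := by
  have key : ∀ p ∈ Finset.range (2*n+2),
      (v - v⁻¹) * (((-1:F)^p * qbinom v (2*n+1) p) * cb v p * (v⁻¹)^(2*(2*n+1-p)))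
      = v * (v⁻¹)^(2*(2*n+1)) * ((-1:F)^p * (v*v)^p * Bq v (2*n+1) p)
        - v * (v⁻¹)^(2*(2*n+1)) * ((-1:F)^p * (1:F)^p * Bq v (2*n+1) p) := by
    intro p hp
    have hpN : p ≤ 2*n+1 := by have := Finset.mem_range.mp hp; omega
    rw [← Bq_eq_qbinom v huv (2*n+1) hq p hpN]
    have hsplit : (v⁻¹)^(2*(2*n+1-p)) = (v⁻¹)^(2*(2*n+1)) * v^(2*p) := by
      have h1 : (v⁻¹)^(2*(2*n+1-p)) * ((v⁻¹)^(2*p) * v^(2*p)) = (v⁻¹)^(2*(2*n+1)) * v^(2*p) := by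
        rw [← mul_assoc, ← pow_add, show 2*(2*n+1-p) + 2*p = 2*(2*n+1) from by omega]
      rw [mul_comm ((v⁻¹)^(2*p)) (v^(2*p)), pow_cancel v huv (2*p), mul_one] at h1
      exact h1
    rw [hsplit]
    linear_combination ((-1:F)^p * Bq v (2*n+1) p * (v⁻¹)^(2*(2*n+1)) * v^(2*p)) * (cb_mul v huv p)
      - ((-1:F)^p * Bq v (2*n+1) p * v * (v⁻¹)^(2*(2*n+1))) * (pow_cancel v huv (2*p))
  have h2 : (v - v⁻¹) * (∑ p ∈ Finset.range (2*n+2),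
      ((-1:F)^p * qbinom v (2*n+1) p) * cb v p * (v⁻¹)^(2*(2*n+1-p)))
      = v * (v⁻¹)^(2*(2*n+1)) * Tq v (2*n+1) (v*v)
        - v * (v⁻¹)^(2*(2*n+1)) * Tq v (2*n+1) 1 := by
    rw [Finset.mul_sum, Tq, Tq, Finset.mul_sum, Finset.mul_sum, ← Finset.sum_sub_distrib]
    exact Finset.sum_congr rfl key
  rw [Tq_one v huv n, Tq_v2 v huv n hn, mul_zero, sub_self] at h2
  rcases mul_eq_zero.mp h2 with h | h
  · exact absurd h hw
  · exact h

end Scalar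

section Alg
variable {F : Type*} [Field F] {A : Type*} [Ring A] [Algebra F A]

lemma Kpow (v : F) (K E : A) (h : K * E = (v^2) • (E * K)) :
    ∀ m : ℕ, K * E^m = (v^(2*m)) • (E^m * K) := by
  intro m
  induction m with
  | zero => simp
  | succ m ih =>
    have e1 : E^(m+1) = E * E^m := by rw [pow_succ']
    rw [e1, ← mul_assoc, h, smul_mul_assoc, mul_assoc, ih, mul_smul_comm, smul_smul,
      ← pow_add, ← mul_assoc, ← e1]
    congr 1
    · congr 1
      omega

lemma comm_pow (v : F) (Ep Em K K' : A)
    (h4' : (v - v⁻¹) • (Ep * Em) = (v - v⁻¹) • (Em * Ep) + K - K')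
    (hK : ∀ m : ℕ, K * Ep^m = (v^(2*m)) • (Ep^m * K))
    (hK' : ∀ m : ℕ, K' * Ep^m = ((v⁻¹)^(2*m)) • (Ep^m * K')) :
    ∀ m : ℕ, (v - v⁻¹) • (Ep^(m+1) * Em)
      = (v - v⁻¹) • (Em * Ep^(m+1)) + ca v (m+1) • (Ep^m * K) - cb v (m+1) • (Ep^m * K') := by
  intro m
  induction m with
  | zero =>
    have hca : ca v 1 = 1 := by simp [ca]
    have hcb : cb v 1 = 1 := by simp [cb]
    simpa [hca, hcb] using h4'
  | succ m ih =>
    have e1 : Ep^(m+2) = Ep * Ep^(m+1) := by rw [pow_succ']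
    calc (v - v⁻¹) • (Ep^(m+2) * Em)
        = Ep * ((v - v⁻¹) • (Ep^(m+1) * Em)) := by
          rw [e1, mul_assoc, mul_smul_comm]
      _ = Ep * ((v - v⁻¹) • (Em * Ep^(m+1)) + ca v (m+1) • (Ep^m * K)
            - cb v (m+1) • (Ep^m * K')) := by rw [ih]
      _ = ((v - v⁻¹) • (Ep * Em)) * Ep^(m+1) + ca v (m+1) • (Ep^(m+1) * K)
            - cb v (m+1) • (Ep^(m+1) * K') := by
          rw [mul_sub, mul_add, mul_smul_comm, mul_smul_comm, mul_smul_comm,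
            smul_mul_assoc, ← mul_assoc, ← mul_assoc, ← mul_assoc, ← pow_succ' Ep m]
      _ = ((v - v⁻¹) • (Em * Ep) + K - K') * Ep^(m+1) + ca v (m+1) • (Ep^(m+1) * K)
            - cb v (m+1) • (Ep^(m+1) * K') := by rw [h4']
      _ = (v - v⁻¹) • (Em * Ep^(m+2)) + (ca v (m+1) + v^(2*(m+1))) • (Ep^(m+1) * K)
            - (cb v (m+1) + (v⁻¹)^(2*(m+1))) • (Ep^(m+1) * K') := by
          rw [sub_mul, add_mul, smul_mul_assoc, mul_assoc, ← e1, hK (m+1), hK' (m+1),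
            add_smul, add_smul]
          abel
      _ = (v - v⁻¹) • (Em * Ep^(m+2)) + ca v (m+2) • (Ep^(m+1) * K)
            - cb v (m+2) • (Ep^(m+1) * K') := by
          rw [show ca v (m+2) = ca v (m+1) + v^(2*(m+1)) from by
              rw [ca, Finset.sum_range_succ, ← ca],
            show cb v (m+2) = cb v (m+1) + (v⁻¹)^(2*(m+1)) from by
              rw [cb, Finset.sum_range_succ, ← cb]]

lemma main_half (n : ℕ) (hn : 0 < n) (v : F)
    (hq : ∀ t : ℕ, 1 ≤ t → t ≤ 2*n+1 → qint v (t : ℤ) ≠ 0)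
    (Ep Em K K' : A)
    (h1 : K * K' = 1) (h1' : K' * K = 1)
    (h2 : K * Ep = (v^2) • (Ep * K))
    (h4 : (v - v⁻¹) • (Ep * Em - Em * Ep) = K - K') :
    ∑ p ∈ Finset.range (2*n+2),
      ((-1:F)^p * qbinom v (2*n+1) p) • (Ep^p * Em * Ep^(2*n+1-p)) = 0 := by
  -- basic scalar facts
  have hw : v - v⁻¹ ≠ 0 := by
    intro h
    apply hq 1 le_rfl (by omega)
    rw [qint_eq]
    simp [h]
  have hv0 : v ≠ 0 := by
    intro h
    apply hw
    simp [h]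
  have huv : v * v⁻¹ = 1 := mul_inv_cancel₀ hv0
  -- derived algebra relations
  have hEpK : Ep * K = ((v⁻¹)^2) • (K * Ep) := by
    rw [h2, smul_smul, ← mul_pow, inv_mul_cancel₀ hv0, one_pow, one_smul]
  have h2' : K' * Ep = ((v⁻¹)^2) • (Ep * K') := by
    have step : Ep * K' = (v^2) • (K' * Ep) := by
      calc Ep * K' = (K' * K) * Ep * K' := by rw [h1', one_mul]
        _ = K' * (K * Ep) * K' := by rw [mul_assoc K' K Ep]
        _ = K' * ((v^2) • (Ep * K)) * K' := by rw [h2]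
        _ = (v^2) • (K' * Ep * (K * K')) := by
            rw [mul_smul_comm, smul_mul_assoc, mul_assoc, mul_assoc, mul_assoc]
        _ = (v^2) • (K' * Ep) := by rw [h1, mul_one]
    rw [step, smul_smul, ← mul_pow, inv_mul_cancel₀ hv0, one_pow, one_smul]
  have h4' : (v - v⁻¹) • (Ep * Em) = (v - v⁻¹) • (Em * Ep) + K - K' := by
    have h := h4
    rw [smul_sub, sub_eq_iff_eq_add] at h
    rw [h]
    abel
  have hK := Kpow v K Ep h2
  have hK' := Kpow (v⁻¹) K' Ep h2'
  have hcomm := comm_pow v Ep Em K K' h4' hK hK'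
  -- reduce to (v - v⁻¹) • sum = 0
  suffices hS : (v - v⁻¹) • (∑ p ∈ Finset.range (2*n+2),
      ((-1:F)^p * qbinom v (2*n+1) p) • (Ep^p * Em * Ep^(2*n+1-p))) = 0 by
    rcases smul_eq_zero.mp hS with h | h
    · exact absurd h hw
    · exact h
  rw [Finset.smul_sum]
  have hterm : ∀ p ∈ Finset.range (2*n+2),
      (v - v⁻¹) • (((-1:F)^p * qbinom v (2*n+1) p) • (Ep^p * Em * Ep^(2*n+1-p)))
      = ((-1:F)^p * qbinom v (2*n+1) p) • ((v - v⁻¹) • (Em * Ep^(2*n+1)))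
        + (((-1:F)^p * qbinom v (2*n+1) p) * ca v p * v^(2*(2*n+1-p))) • (Ep^(2*n) * K)
        - (((-1:F)^p * qbinom v (2*n+1) p) * cb v p * (v⁻¹)^(2*(2*n+1-p))) • (Ep^(2*n) * K') := by
    intro p hp
    have hpN : p ≤ 2*n+1 := by have := Finset.mem_range.mp hp; omega
    rw [smul_comm]
    match p with
    | 0 =>
      simp [ca, cb]
    | q+1 =>
      have e0 : 2*n+1-(q+1) = 2*n-q := by omega
      have e1 : Ep^(q+1) * Em * Ep^(2*n-q) = Ep^(q+1) * Em * Ep^(2*n-q) := rfl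
      have key : (v - v⁻¹) • (Ep^(q+1) * Em * Ep^(2*n-q))
          = (v - v⁻¹) • (Em * Ep^(2*n+1))
            + (ca v (q+1) * v^(2*(2*n-q))) • (Ep^(2*n) * K)
            - (cb v (q+1) * (v⁻¹)^(2*(2*n-q))) • (Ep^(2*n) * K') := by
        have hq1 : q+1 ≤ 2*n+1 := hpN
        calc (v - v⁻¹) • (Ep^(q+1) * Em * Ep^(2*n-q))
            = ((v - v⁻¹) • (Ep^(q+1) * Em)) * Ep^(2*n-q) := by rw [smul_mul_assoc]
          _ = ((v - v⁻¹) • (Em * Ep^(q+1)) + ca v (q+1) • (Ep^q * K)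
                - cb v (q+1) • (Ep^q * K')) * Ep^(2*n-q) := by rw [hcomm q]
          _ = (v - v⁻¹) • (Em * (Ep^(q+1) * Ep^(2*n-q)))
                + ca v (q+1) • (Ep^q * (K * Ep^(2*n-q)))
                - cb v (q+1) • (Ep^q * (K' * Ep^(2*n-q))) := by
              rw [sub_mul, add_mul, smul_mul_assoc, smul_mul_assoc, smul_mul_assoc,
                mul_assoc, mul_assoc, mul_assoc]
          _ = (v - v⁻¹) • (Em * Ep^(2*n+1))
                + (ca v (q+1) * v^(2*(2*n-q))) • (Ep^(2*n) * K)
                - (cb v (q+1) * (v⁻¹)^(2*(2*n-q))) • (Ep^(2*n) * K') := by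
              rw [hK (2*n-q), hK' (2*n-q), ← pow_add,
                show q+1 + (2*n-q) = 2*n+1 from by omega,
                mul_smul_comm, mul_smul_comm, smul_smul, smul_smul,
                ← mul_assoc (Ep^q), ← pow_add,
                show q + (2*n-q) = 2*n from by omega,
                ← mul_assoc (Ep^q), ← pow_add,
                show q + (2*n-q) = 2*n from by omega]
      rw [e0, key]
      module
  rw [Finset.sum_congr rfl hterm, Finset.sum_sub_distrib, Finset.sum_add_distrib,
    ← Finset.sum_smul, ← Finset.sum_smul, ← Finset.sum_smul,
    Fsum1 v huv n hq, Fsum2 v huv hw n hn hq, Fsum3 v huv hw n hn hq]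
  simp

end Alg

/-- In any associative unital algebra over a field whose elements
`E⁺, E⁻, K, K'` satisfy the quantized sl₂ relations, the higher quantum Serre
relations of order `2n+1` hold. -/
theorem stmt5 {F : Type*} [Field F] {A : Type*} [Ring A] [Algebra F A]
    (n : ℕ) (hn : 0 < n) (v : F) (hv : IsUnit v)
    (hq : ∀ t : ℕ, 1 ≤ t → t ≤ 2 * n + 1 → qint v t ≠ 0)
    (Ep Em K K' : A)
    (h1 : K * K' = 1) (h1' : K' * K = 1)
    (h2 : K * Ep = (v ^ 2) • (Ep * K))
    (h3 : K * Em = ((v⁻¹) ^ 2) • (Em * K))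
    (h4 : (v - v⁻¹) • (Ep * Em - Em * Ep) = K - K') :
    (∑ p ∈ Finset.range (2 * n + 2),
        ((-1 : F) ^ p * qbinom v (2 * n + 1) p) • (Ep ^ p * Em * Ep ^ (2 * n + 1 - p)) = 0)
    ∧ (∑ p ∈ Finset.range (2 * n + 2),
        ((-1 : F) ^ p * qbinom v (2 * n + 1) p) • (Em ^ p * Ep * Em ^ (2 * n + 1 - p)) = 0) := by
  have hw : v - v⁻¹ ≠ 0 := by
    intro h
    apply hq 1 le_rfl (by omega)
    rw [show ((1:ℕ) : ℤ) = ((1:ℕ) : ℤ) from rfl, qint_eq]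
    simp [h]
  have hv0 : v ≠ 0 := by intro h; apply hw; simp [h]
  have huv : v * v⁻¹ = 1 := mul_inv_cancel₀ hv0
  constructor
  · exact main_half n hn v hq Ep Em K K' h1 h1' h2 h4
  · -- swapped version
    have h2s : K' * Em = (v ^ 2) • (Em * K') := by
      have step : Em * K' = ((v⁻¹)^2) • (K' * Em) := by
        calc Em * K' = (K' * K) * Em * K' := by rw [h1', one_mul]
          _ = K' * (K * Em) * K' := by rw [mul_assoc K' K Em]
          _ = K' * (((v⁻¹)^2) • (Em * K)) * K' := by rw [h3]
          _ = ((v⁻¹)^2) • (K' * Em * (K * K')) := by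
              rw [mul_smul_comm, smul_mul_assoc, mul_assoc, mul_assoc, mul_assoc]
          _ = ((v⁻¹)^2) • (K' * Em) := by rw [h1, mul_one]
      rw [step, smul_smul, ← mul_pow, huv, one_pow, one_smul]
    have h4s : (v - v⁻¹) • (Em * Ep - Ep * Em) = K' - K := by
      rw [show Em * Ep - Ep * Em = -(Ep * Em - Em * Ep) from by abel, smul_neg, h4]
      abel
    exact main_half n hn v hq Em Ep K' K h1' h1 h2s h4s
end

section
/- Let ℚ(v) be the field of rational functions over ℚ in an indeterminate v, with balanced quantum integers [m] = (v^m - v^{-m})/(v - v^{-1}) and quantum binomial coefficients [m choose p] = [m]!/([p]![m-p]!) where [m]! = ∏_{t=1}^{m}[t]. For positive integers n and i with 1 ≤ i ≤ n, define B_{n,i} = Σ_{p=n-i+1}^{n} (-1)^{p+1} [2n+1 choose p] [2(n-p)+1]. Then B_{n,i} = (-1)^{n-i} [2n+1 choose n-i] · [n+i+1]·[i]/[n]. -/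
section QuantumIntegers

variable {F : Type*} [Field F] {v : F}

lemma zpow_ne_one_of_not_isOfFinOrder (hv : ¬IsOfFinOrder v) {k : ℤ} (hk : k ≠ 0) :
    v ^ k ≠ 1 := by
  intro h
  refine hv (isOfFinOrder_iff_pow_eq_one.mpr ⟨k.natAbs, Int.natAbs_pos.mpr hk, ?_⟩)
  rcases Int.natAbs_eq k with hk' | hk'
  · rwa [hk', zpow_natCast] at h
  · rwa [hk', zpow_neg, inv_eq_one, zpow_natCast] at h

lemma zpow_sub_zpow_neg_ne_zero (hv0 : v ≠ 0) (hv : ¬IsOfFinOrder v) {k : ℤ} (hk : k ≠ 0) :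
    v ^ k - v ^ (-k) ≠ 0 := by
  rw [sub_ne_zero, ne_eq, ← mul_inv_eq_one₀ (zpow_ne_zero _ hv0), ← zpow_neg,
    ← zpow_add₀ hv0, neg_neg]
  exact zpow_ne_one_of_not_isOfFinOrder hv (by omega)

lemma sub_inv_ne_zero (hv0 : v ≠ 0) (hv : ¬IsOfFinOrder v) : v - v⁻¹ ≠ 0 := by
  simpa using zpow_sub_zpow_neg_ne_zero hv0 hv one_ne_zero

lemma qint_ne_zero (hv0 : v ≠ 0) (hv : ¬IsOfFinOrder v) {m : ℤ} (hm : m ≠ 0) :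
    qint v m ≠ 0 :=
  div_ne_zero (zpow_sub_zpow_neg_ne_zero hv0 hv hm) (sub_inv_ne_zero hv0 hv)

lemma qfact_ne_zero_s7 (hv0 : v ≠ 0) (hv : ¬IsOfFinOrder v) (m : ℕ) : qfact v m ≠ 0 := by
  induction m with
  | zero => exact one_ne_zero
  | succ k ih => exact mul_ne_zero ih (qint_ne_zero hv0 hv (by omega))

lemma qint_zero : qint v 0 = 0 := by simp [qint]

lemma qint_add_add_one_mul_add_qint_sub_mul (a b : ℤ) :
    qint v (a + b + 1) * qint v b + qint v (a - b) * qint v (b + 1)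
      = qint v (2 * b + 1) * qint v a := by
  by_cases hs : v - v⁻¹ = 0
  -- then every `[m]` is the junk value `x / 0 = 0`
  · simp [qint, hs]
  have hv0 : v ≠ 0 := by rintro rfl; simp at hs
  simp only [qint, div_mul_div_comm, ← add_div]
  congr 1
  simp only [neg_add, neg_sub, two_mul, zpow_add₀ hv0, zpow_sub₀ hv0, zpow_one, zpow_neg]
  field_simp
  ring

lemma qbinom_succ_mul_qint (hv0 : v ≠ 0) (hv : ¬IsOfFinOrder v) {m t : ℕ} (ht : t < m) :
    qbinom v m (t + 1) * qint v ((t : ℤ) + 1) = qbinom v m t * qint v ((m : ℤ) - t) := by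
  obtain ⟨k, rfl⟩ : ∃ k, m = t + k + 1 := ⟨m - t - 1, by omega⟩
  have hf := qfact_ne_zero_s7 hv0 hv
  simp only [qbinom]
  rw [show t + k + 1 - t = k + 1 by omega, show t + k + 1 - (t + 1) = k by omega]
  simp only [qfact]
  rw [show ((t + k + 1 : ℕ) : ℤ) - t = (k : ℕ) + 1 by push_cast; ring]
  field_simp [hf, qint_ne_zero hv0 hv (show ((t : ℤ) + 1) ≠ 0 by omega),
    qint_ne_zero hv0 hv (show ((k : ℤ) + 1) ≠ 0 by omega)]

theorem sum_Icc_neg_one_pow_mul_qbinom_mul_qint (hv0 : v ≠ 0) (hv : ¬IsOfFinOrder v)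
    {n i : ℕ} (hin : i ≤ n) :
    ∑ p ∈ Finset.Icc (n - i + 1) n,
        (-1 : F) ^ (p + 1) * qbinom v (2 * n + 1) p * qint v (2 * ((n : ℤ) - p) + 1)
      = (-1 : F) ^ (n - i) * qbinom v (2 * n + 1) (n - i) *
          (qint v ((n : ℤ) + i + 1) * qint v i / qint v n) := by
  induction i with
  | zero => simp [qint_zero]
  | succ i ih =>
    obtain ⟨j, rfl⟩ : ∃ j, n = j + i + 1 := ⟨n - i - 1, by omega⟩
    have hn : qint v ((j + i + 1 : ℕ) : ℤ) ≠ 0 := qint_ne_zero hv0 hv (by omega)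
    have hsplit : Finset.Icc (j + i + 1 - (i + 1) + 1) (j + i + 1)
        = insert (j + 1) (Finset.Icc (j + i + 1 - i + 1) (j + i + 1)) := by
      rw [show j + i + 1 - (i + 1) + 1 = j + 1 by omega, show j + i + 1 - i = j + 1 by omega,
        Finset.insert_Icc_add_one_left_eq_Icc (by omega)]
    have hbinom := qbinom_succ_mul_qint hv0 hv (show j < 2 * (j + i + 1) + 1 by omega)
    have hqint := qint_add_add_one_mul_add_qint_sub_mul (v := v) ((j + i + 1 : ℕ) : ℤ) i
    rw [hsplit, Finset.sum_insert (by simp), ih (by omega),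
      show j + i + 1 - (i + 1) = j by omega, show j + i + 1 - i = j + 1 by omega]
    push_cast at hbinom hqint hn ⊢
    field_simp
    rw [show 2 * ((j : ℤ) + i + 1 - (j + 1)) + 1 = 2 * i + 1 by ring]
    rw [show 2 * ((j : ℤ) + i + 1) + 1 - j = j + i + 1 + (i + 1) + 1 by ring] at hbinom
    rw [show (j : ℤ) + i + 1 - i = j + 1 by ring] at hqint
    linear_combination (-1 : F) ^ j * (qint v ((i : ℤ) + 1) * hbinom
      - qbinom v (2 * (j + i + 1) + 1) (j + 1) * hqint)

end QuantumIntegers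

lemma RatFunc.not_isOfFinOrder_X {K : Type*} [Field K] :
    ¬IsOfFinOrder (RatFunc.X : RatFunc K) := by
  rw [isOfFinOrder_iff_pow_eq_one]
  rintro ⟨m, hm, h⟩
  have hpoly : (Polynomial.X ^ m : Polynomial K) = 1 :=
    RatFunc.algebraMap_injective K (by simpa using h)
  have := congrArg Polynomial.natDegree hpoly
  simp only [Polynomial.natDegree_X_pow, Polynomial.natDegree_one] at this
  omega

theorem stmt7_general (n i : ℕ) (h2 : i ≤ n) :
    ∑ p ∈ Finset.Icc (n - i + 1) n,
        (-1 : Kv) ^ (p + 1) * qbinom vv (2 * n + 1) p * qint vv (2 * ((n : ℤ) - p) + 1)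
      = (-1 : Kv) ^ (n - i) * qbinom vv (2 * n + 1) (n - i) *
          (qint vv ((n : ℤ) + i + 1) * qint vv i / qint vv n) :=
  sum_Icc_neg_one_pow_mul_qbinom_mul_qint RatFunc.X_ne_zero RatFunc.not_isOfFinOrder_X h2

/-- For `1 ≤ i ≤ n`, the partial sum
`B_{n,i} = Σ_{p=n-i+1}^{n} (-1)^{p+1} [2n+1 choose p] [2(n-p)+1]` equals
`(-1)^{n-i} [2n+1 choose n-i] [n+i+1][i]/[n]` in ℚ(v). -/
theorem stmt7 (n i : ℕ) (h1 : 1 ≤ i) (h2 : i ≤ n) :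
    ∑ p ∈ Finset.Icc (n - i + 1) n,
        (-1 : Kv) ^ (p + 1) * qbinom vv (2 * n + 1) p * qint vv (2 * ((n : ℤ) - p) + 1)
      = (-1 : Kv) ^ (n - i) * qbinom vv (2 * n + 1) (n - i) *
          (qint vv ((n : ℤ) + i + 1) * qint vv i / qint vv n) :=
  stmt7_general n i h2
end
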